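/- arXiv:0909.5175 — 2 statements merged into one kernel-verified Lean document; each statement's English description precedes it below -/
import Mathlib

section
/- For every integer d ≥ 1 there is a constant c_d such that the following holds. Let P be a real polynomial on R^n of total degree at most d with E_{X ~ N(0,1)^n}[P(X)²] = 1, let δ ∈ (0,1), let X and Y be independent standard Gaussian vectors on R^n, and let Z = (1-δ)·X + √(2δ-δ²)·Y. Then the perturbation polynomial Q(X,Y) = P(Z) − P(X) satisfies E[Q(X,Y)²] ≤ c_d² · δ. -/
/-!
Put `ρ = 1 - δ` and `s = √(2δ - δ²)`, so that `ρ² + s² = 1` and `Z = ρX + sY` is again a standard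
Gaussian vector. Then `E[Q²] = 2 E[P(X)²] - 2 E[P(X) P(Z)]`. Expanding `P` in monomials, the
correlation `E[P(X) P(Z)]` is a polynomial `q(ρ)` of degree at most `d`: the coefficient of a
monomial is a product of one-dimensional moments, and since odd Gaussian moments vanish, `s` only
enters through `s² = 1 - ρ²`. By Cauchy–Schwarz `|q| ≤ 1` on `[-1, 1]`, and `q(1) = E[P(X)²] = 1`.
Lagrange interpolation at `d + 1` nodes bounds the coefficients of such a `q` by a constant
depending only on `d`, hence `q(1) - q(ρ) ≤ C_d (1 - ρ) = C_d δ` and `E[Q²] ≤ 2 C_d δ`.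
-/

open Finset MeasureTheory ProbabilityTheory
open scoped Classical

noncomputable section

/-- The ±1 real value of a Boolean bit (`true ↦ 1`, `false ↦ -1`). -/
def pmOne (b : Bool) : ℝ := if b then 1 else -1

/-- Noise sensitivity at rate `δ` of a Boolean function on the hypercube `{-1,1}^n`:
`Pr[f(X) ≠ f(Z)]` where `X` is uniform and `Z` flips each coordinate of `X`
independently with probability `δ`. -/
def noiseSens {n : ℕ} (δ : ℝ) (f : (Fin n → Bool) → Bool) : ℝ :=
  (1 / 2 ^ n : ℝ) * ∑ x : Fin n → Bool, ∑ s : Fin n → Bool,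
    (∏ i, if s i then δ else 1 - δ) * (if f x ≠ f (fun i => xor (s i) (x i)) then 1 else 0)

/-- Influence of the `i`-th variable: `Pr[f(X) ≠ f(X^{(i)})]`. -/
def influence {n : ℕ} (f : (Fin n → Bool) → Bool) (i : Fin n) : ℝ :=
  (1 / 2 ^ n : ℝ) * ∑ x : Fin n → Bool,
    if f x ≠ f (Function.update x i (!x i)) then 1 else 0

/-- Average sensitivity (total influence). -/
def avgSens {n : ℕ} (f : (Fin n → Bool) → Bool) : ℝ := ∑ i, influence f i

/-- `f` is a degree-`d` polynomial threshold function: `f = sign(P)` for some real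
polynomial of total degree at most `d`, with the convention `sign 0 = 1`. -/
def IsPTF {n : ℕ} (d : ℕ) (f : (Fin n → Bool) → Bool) : Prop :=
  ∃ P : MvPolynomial (Fin n) ℝ, P.totalDegree ≤ d ∧
    ∀ x, (f x = true ↔ 0 ≤ MvPolynomial.eval (fun i => pmOne (x i)) P)

/-- Evaluation of the multilinear polynomial with coefficients `a` at the point `x`. -/
def mlEval {n : ℕ} (a : Finset (Fin n) → ℝ) (x : Fin n → ℝ) : ℝ :=
  ∑ I : Finset (Fin n), a I * ∏ i ∈ I, x i

/-- The multilinear polynomial with coefficients `a` has degree at most `d`. -/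
def DegLE {n : ℕ} (a : Finset (Fin n) → ℝ) (d : ℕ) : Prop :=
  ∀ I, a I ≠ 0 → I.card ≤ d

/-- Squared weight `w_i²` of coordinate `i`: `Σ_{I ∋ i} a_I²`. -/
def wsq {n : ℕ} (a : Finset (Fin n) → ℝ) (i : Fin n) : ℝ :=
  ∑ I ∈ univ.filter (fun I : Finset (Fin n) => i ∈ I), a I ^ 2

/-- `ε`-regularity: `Σ_i w_i⁴ ≤ ε² (Σ_i w_i²)²`. -/
def Regular {n : ℕ} (a : Finset (Fin n) → ℝ) (ε : ℝ) : Prop :=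
  ∑ i, wsq a i ^ 2 ≤ ε ^ 2 * (∑ i, wsq a i) ^ 2

/-- `σ_{k+1}²(P) = Σ_{j ≥ k (0-based)} w_j²` (tail weight, `k` restricted variables). -/
def sigmaSq {n : ℕ} (a : Finset (Fin n) → ℝ) (k : ℕ) : ℝ :=
  ∑ j ∈ univ.filter (fun j : Fin n => k ≤ (j : ℕ)), wsq a j

/-- The variables are ordered by decreasing weight. -/
def OrderedWeights {n : ℕ} (a : Finset (Fin n) → ℝ) : Prop :=
  ∀ i j : Fin n, i ≤ j → wsq a j ≤ wsq a i

/-- The `ε`-critical index `K(P,ε)`: least `k` such that `w_j² ≤ ε² σ_{k+1}²` for all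
`j` beyond the first `k` variables. -/
def critIndex {n : ℕ} (a : Finset (Fin n) → ℝ) (ε : ℝ) : ℕ :=
  sInf {k : ℕ | ∀ j : Fin n, k ≤ (j : ℕ) → wsq a j ≤ ε ^ 2 * sigmaSq a k}

/-- Coefficients (in the variables `Y_j`, `j ≥ K`) of the restriction of the multilinear
polynomial `a` obtained by fixing the first `K` variables to `x`. -/
def restCoeff {n : ℕ} (a : Finset (Fin n) → ℝ) (K : ℕ) (x : Fin n → ℝ)
    (J : Finset (Fin n)) : ℝ :=
  if ∀ j ∈ J, K ≤ (j : ℕ) then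
    ∑ I ∈ univ.filter (fun I : Finset (Fin n) => I.filter (fun i => K ≤ i.val) = J),
      a I * ∏ i ∈ I.filter (fun i => i.val < K), x i
  else 0

/-- Standard Gaussian measure on `ℝ^n`. -/
def gaussn (n : ℕ) : Measure (Fin n → ℝ) := Measure.pi fun _ => gaussianReal 0 1

/-- Gaussian noise sensitivity: `Pr[f(X) ≠ f((1-δ)X + √(2δ-δ²)Y)]` for independent
standard Gaussian vectors `X, Y`. -/
def gns (n : ℕ) (δ : ℝ) (f : (Fin n → ℝ) → ℝ) : ℝ :=
  (((gaussn n).prod (gaussn n))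
    {p | f p.1 ≠ f (fun i => (1 - δ) * p.1 i + Real.sqrt (2 * δ - δ ^ 2) * p.2 i)}).toReal

/-- Normalized probabilists' Hermite polynomial `H_k(x)`. -/
def normHermite (k : ℕ) (x : ℝ) : ℝ :=
  Polynomial.aeval x (Polynomial.hermite k) / Real.sqrt (Nat.factorial k)

namespace Polynomial

lemma exists_sum_abs_coeff_le (D : ℕ) :
    ∃ M : ℝ, ∀ p : ℝ[X], p.natDegree ≤ D → (∀ t ∈ Set.Icc (0 : ℝ) 1, |p.eval t| ≤ 1) →
      ∑ k ∈ range (D + 1), |p.coeff k| ≤ M := by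
  set nodes := range (D + 1)
  let v : ℕ → ℝ := fun i => i / (D + 1)
  have hv : Set.InjOn v nodes := fun a _ b _ hab => by
    simpa [v, div_left_inj' (by positivity : (D : ℝ) + 1 ≠ 0)] using hab
  refine ⟨∑ k ∈ nodes, ∑ i ∈ nodes, |(Lagrange.basis nodes v i).coeff k|,
    fun p hp hbdd => sum_le_sum fun k _ => ?_⟩
  have hdeg : p.degree < nodes.card := by
    rw [card_range]
    exact (degree_le_of_natDegree_le hp).trans_lt (by exact_mod_cast Nat.lt_succ_self D)
  conv_lhs => rw [Lagrange.eq_interpolate hv hdeg, Lagrange.interpolate_apply, finsetSum_coeff]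
  refine (abs_sum_le_sum_abs _ _).trans (sum_le_sum fun i hi => ?_)
  rw [coeff_C_mul, abs_mul]
  have hi : (i : ℝ) ≤ D + 1 := by exact_mod_cast (mem_range.mp hi).le
  exact mul_le_of_le_one_left (abs_nonneg _)
    (hbdd _ ⟨by positivity, (div_le_one (by positivity)).mpr hi⟩)

lemma exists_eval_one_sub_eval_le (D : ℕ) :
    ∃ C : ℝ, 0 ≤ C ∧ ∀ p : ℝ[X], p.natDegree ≤ D → (∀ t ∈ Set.Icc (0 : ℝ) 1, |p.eval t| ≤ 1) →
      ∀ ρ ∈ Set.Icc (0 : ℝ) 1, p.eval 1 - p.eval ρ ≤ C * (1 - ρ) := by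
  obtain ⟨M, hM⟩ := exists_sum_abs_coeff_le D
  have hM0 : 0 ≤ M := by simpa using hM 0 (by simp) (by simp)
  refine ⟨M * D, by positivity, fun p hp hbdd ρ hρ => ?_⟩
  have hlt : p.natDegree < D + 1 := Nat.lt_succ_of_le hp
  rw [eval_eq_sum_range' hlt, eval_eq_sum_range' hlt, ← sum_sub_distrib]
  have hterm (k : ℕ) (hk : k ∈ range (D + 1)) :
      p.coeff k * 1 ^ k - p.coeff k * ρ ^ k ≤ |p.coeff k| * (D * (1 - ρ)) := by
    have hkD : (k : ℝ) ≤ D := by exact_mod_cast Nat.lt_succ_iff.mp (mem_range.mp hk)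
    have hbern : 1 + k * (ρ - 1) ≤ ρ ^ k := by
      simpa using one_add_mul_le_pow (a := ρ - 1) (by linarith [hρ.1]) k
    have hpow : ρ ^ k ≤ 1 := pow_le_one₀ hρ.1 hρ.2
    calc p.coeff k * 1 ^ k - p.coeff k * ρ ^ k = p.coeff k * (1 - ρ ^ k) := by ring
      _ ≤ |p.coeff k| * (1 - ρ ^ k) := mul_le_mul_of_nonneg_right (le_abs_self _) (by linarith)
      _ ≤ |p.coeff k| * (D * (1 - ρ)) := by gcongr; nlinarith [hρ.2]
  calc _ ≤ ∑ k ∈ range (D + 1), |p.coeff k| * (D * (1 - ρ)) := sum_le_sum hterm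
    _ = (∑ k ∈ range (D + 1), |p.coeff k|) * (D * (1 - ρ)) := (sum_mul ..).symm
    _ ≤ M * (D * (1 - ρ)) :=
        mul_le_mul_of_nonneg_right (hM p hp hbdd) (mul_nonneg D.cast_nonneg (by linarith [hρ.2]))
    _ = M * D * (1 - ρ) := by ring

end Polynomial

lemma measurePreserving_mul_add_mul_gaussianReal {ρ s : ℝ} (h : ρ ^ 2 + s ^ 2 = 1) :
    MeasurePreserving (fun p : ℝ × ℝ => ρ * p.1 + s * p.2)
      ((gaussianReal 0 1).prod (gaussianReal 0 1)) (gaussianReal 0 1) := by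
  refine ⟨by fun_prop, ?_⟩
  have hcomp : (fun p : ℝ × ℝ => ρ * p.1 + s * p.2)
      = (fun p : ℝ × ℝ => p.1 + p.2) ∘ Prod.map (ρ * ·) (s * ·) := rfl
  rw [hcomp, ← Measure.map_map (by fun_prop) (by fun_prop),
    ← Measure.map_prod_map _ _ (by fun_prop) (by fun_prop), gaussianReal_map_const_mul,
    gaussianReal_map_const_mul]
  change Measure.conv _ _ = _
  rw [gaussianReal_conv_gaussianReal]
  congr 1
  · simp
  · ext; simp [h]

lemma measurePreserving_mul_add_mul_gaussn {n : ℕ} {ρ s : ℝ} (h : ρ ^ 2 + s ^ 2 = 1) :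
    MeasurePreserving (fun p : (Fin n → ℝ) × (Fin n → ℝ) => fun i => ρ * p.1 i + s * p.2 i)
      ((gaussn n).prod (gaussn n)) (gaussn n) :=
  (measurePreserving_pi _ _ fun _ => measurePreserving_mul_add_mul_gaussianReal h).comp
    (measurePreserving_arrowProdEquivProdArrow ℝ ℝ (Fin n) _ _).symm

lemma integrable_pow_gaussianReal (k : ℕ) : Integrable (fun x : ℝ => x ^ k) (gaussianReal 0 1) :=
  integrable_pow_of_mem_interior_integrableExpSet (X := fun x => x) (by simp) k

def gaussMoment (k : ℕ) : ℝ := ∫ x, x ^ k ∂gaussianReal 0 1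

lemma gaussMoment_eq_zero_of_odd {k : ℕ} (hk : Odd k) : gaussMoment k = 0 := by
  have hsymm : gaussMoment k = ∫ x, (-x) ^ k ∂gaussianReal 0 1 := by
    conv_lhs => rw [gaussMoment, ← neg_zero, ← gaussianReal_map_neg]
    rw [integral_map (by fun_prop) (by fun_prop)]
  simp only [hk.neg_pow, integral_neg] at hsymm
  rw [gaussMoment] at hsymm ⊢
  linarith

lemma pow_mul_mul_add_mul_pow_eq_sum (a b : ℕ) (ρ s : ℝ) (p : ℝ × ℝ) :
    p.1 ^ a * (ρ * p.1 + s * p.2) ^ b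
      = ∑ j ∈ range (b + 1),
          (b.choose j * ρ ^ j * s ^ (b - j)) * (p.1 ^ (a + j) * p.2 ^ (b - j)) := by
  rw [add_pow, Finset.mul_sum]
  refine Finset.sum_congr rfl fun j _ => ?_
  ring

lemma integrable_pow_mul_mul_add_mul_pow (a b : ℕ) (ρ s : ℝ) :
    Integrable (fun p : ℝ × ℝ => p.1 ^ a * (ρ * p.1 + s * p.2) ^ b)
      ((gaussianReal 0 1).prod (gaussianReal 0 1)) := by
  simp_rw [pow_mul_mul_add_mul_pow_eq_sum]
  exact integrable_finsetSum _ fun j _ =>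
    ((integrable_pow_gaussianReal _).mul_prod (integrable_pow_gaussianReal _)).const_mul _

lemma integral_pow_mul_mul_add_mul_pow (a b : ℕ) (ρ s : ℝ) :
    ∫ p : ℝ × ℝ, p.1 ^ a * (ρ * p.1 + s * p.2) ^ b ∂(gaussianReal 0 1).prod (gaussianReal 0 1)
      = ∑ j ∈ range (b + 1),
          b.choose j * ρ ^ j * s ^ (b - j) * (gaussMoment (a + j) * gaussMoment (b - j)) := by
  simp_rw [pow_mul_mul_add_mul_pow_eq_sum]
  rw [integral_finsetSum _ fun j _ =>
    ((integrable_pow_gaussianReal _).mul_prod (integrable_pow_gaussianReal _)).const_mul _]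
  refine Finset.sum_congr rfl fun j _ => ?_
  rw [integral_const_mul, integral_prod_mul (fun x : ℝ => x ^ (a + j)) (fun y : ℝ => y ^ (b - j))]
  rfl

open Polynomial in
def pairCorrPoly (a b : ℕ) : ℝ[X] :=
  ∑ j ∈ range (b + 1),
    C (b.choose j * (gaussMoment (a + j) * gaussMoment (b - j))) * X ^ j
      * (1 - X ^ 2) ^ ((b - j) / 2)

open Polynomial in
lemma natDegree_pairCorrPoly_le (a b : ℕ) : (pairCorrPoly a b).natDegree ≤ b := by
  refine natDegree_sum_le_of_forall_le _ _ fun j hj => ?_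
  have hjb : j ≤ b := Nat.lt_succ_iff.mp (mem_range.mp hj)
  have h1 : (1 - X ^ 2 : ℝ[X]).natDegree ≤ 2 :=
    (natDegree_sub_le _ _).trans (by simp)
  calc _ ≤ (C _ * X ^ j).natDegree + ((1 - X ^ 2 : ℝ[X]) ^ ((b - j) / 2)).natDegree :=
        natDegree_mul_le
    _ ≤ j + (b - j) / 2 * 2 := by
        gcongr
        · exact natDegree_C_mul_le _ _ |>.trans (natDegree_X_pow_le j)
        · exact natDegree_pow_le.trans (Nat.mul_le_mul_left _ h1)
    _ ≤ b := by omega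

open Polynomial in
lemma eval_pairCorrPoly (a b : ℕ) {ρ s : ℝ} (h : ρ ^ 2 + s ^ 2 = 1) :
    (pairCorrPoly a b).eval ρ
      = ∫ p : ℝ × ℝ, p.1 ^ a * (ρ * p.1 + s * p.2) ^ b
          ∂(gaussianReal 0 1).prod (gaussianReal 0 1) := by
  rw [integral_pow_mul_mul_add_mul_pow, pairCorrPoly, eval_finsetSum]
  refine Finset.sum_congr rfl fun j _ => ?_
  simp only [eval_mul, eval_C, eval_pow, eval_X, eval_sub, eval_one]
  -- odd moments vanish, so only even powers of `s`, i.e. powers of `s ^ 2 = 1 - ρ ^ 2`, survive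
  rcases Nat.even_or_odd (b - j) with ⟨t, ht⟩ | hodd
  · rw [ht, ← two_mul, Nat.mul_div_cancel_left _ two_pos, pow_mul, ← h]
    ring
  · rw [gaussMoment_eq_zero_of_odd hodd]
    ring

section PiProd

variable {ι α β : Type*} [Fintype ι] [MeasurableSpace α] [MeasurableSpace β]
  {μ : Measure α} {ν : Measure β} [SigmaFinite μ] [SigmaFinite ν]

lemma integrable_prod_pi_prod {f : ι → α × β → ℝ} (hf : ∀ i, Integrable (f i) (μ.prod ν)) :
    Integrable (fun p : (ι → α) × (ι → β) => ∏ i, f i (p.1 i, p.2 i))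
      ((Measure.pi fun _ => μ).prod (Measure.pi fun _ => ν)) := by
  rw [← (measurePreserving_arrowProdEquivProdArrow α β ι _ _).integrable_comp_emb
    (MeasurableEquiv.measurableEmbedding _)]
  exact Integrable.fintype_prod hf

lemma integral_prod_pi_prod (f : ι → α × β → ℝ) :
    ∫ p : (ι → α) × (ι → β), ∏ i, f i (p.1 i, p.2 i)
        ∂(Measure.pi fun _ => μ).prod (Measure.pi fun _ => ν)
      = ∏ i, ∫ q, f i q ∂μ.prod ν := by
  rw [← (measurePreserving_arrowProdEquivProdArrow α β ι _ _).integral_comp']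
  exact integral_fintype_prod_eq_prod _

end PiProd

lemma integral_sub_const_mul_sq {Ω : Type*} [MeasurableSpace Ω] {μ : Measure Ω} {X Z : Ω → ℝ}
    (hX : Integrable (fun ω => X ω ^ 2) μ) (hZ : Integrable (fun ω => Z ω ^ 2) μ)
    (hXZ : Integrable (fun ω => X ω * Z ω) μ) (c : ℝ) :
    ∫ ω, (Z ω - c * X ω) ^ 2 ∂μ
      = ∫ ω, Z ω ^ 2 ∂μ + c ^ 2 * ∫ ω, X ω ^ 2 ∂μ - 2 * c * ∫ ω, X ω * Z ω ∂μ := by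
  have hsum : Integrable (fun ω => Z ω ^ 2 + c ^ 2 * X ω ^ 2) μ := hZ.add (hX.const_mul _)
  rw [← integral_const_mul, ← integral_const_mul, ← integral_add hZ (hX.const_mul _),
    ← integral_sub hsum (hXZ.const_mul _)]
  exact integral_congr_ae (.of_forall fun ω => by ring)

variable {n : ℕ}

lemma eval_mul_eval_mul_add_mul (A B : MvPolynomial (Fin n) ℝ) (ρ s : ℝ)
    (p : (Fin n → ℝ) × (Fin n → ℝ)) :
    MvPolynomial.eval p.1 A * MvPolynomial.eval (fun i => ρ * p.1 i + s * p.2 i) B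
      = ∑ α ∈ A.support, ∑ β ∈ B.support,
          A.coeff α * B.coeff β * ∏ i, p.1 i ^ α i * (ρ * p.1 i + s * p.2 i) ^ β i := by
  rw [MvPolynomial.eval_eq', MvPolynomial.eval_eq', Finset.sum_mul_sum]
  refine Finset.sum_congr rfl fun α _ => Finset.sum_congr rfl fun β _ => ?_
  rw [Finset.prod_mul_distrib]
  ring

lemma integrable_prod_pow_mul_mul_add_mul_pow (a b : Fin n → ℕ) (ρ s : ℝ) :
    Integrable
      (fun p : (Fin n → ℝ) × (Fin n → ℝ) => ∏ i, p.1 i ^ a i * (ρ * p.1 i + s * p.2 i) ^ b i)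
      ((gaussn n).prod (gaussn n)) :=
  integrable_prod_pi_prod (f := fun i q => q.1 ^ a i * (ρ * q.1 + s * q.2) ^ b i)
    fun i => integrable_pow_mul_mul_add_mul_pow (a i) (b i) ρ s

lemma integral_prod_pow_mul_mul_add_mul_pow (a b : Fin n → ℕ) {ρ s : ℝ} (h : ρ ^ 2 + s ^ 2 = 1) :
    ∫ p : (Fin n → ℝ) × (Fin n → ℝ), ∏ i, p.1 i ^ a i * (ρ * p.1 i + s * p.2 i) ^ b i
        ∂(gaussn n).prod (gaussn n)
      = ∏ i, (pairCorrPoly (a i) (b i)).eval ρ :=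
  (integral_prod_pi_prod (fun i q => q.1 ^ a i * (ρ * q.1 + s * q.2) ^ b i)).trans
    (Finset.prod_congr rfl fun _ _ => (eval_pairCorrPoly _ _ h).symm)

lemma integrable_eval_mul_eval_mul_add_mul (A B : MvPolynomial (Fin n) ℝ) (ρ s : ℝ) :
    Integrable
      (fun p : (Fin n → ℝ) × (Fin n → ℝ) =>
        MvPolynomial.eval p.1 A * MvPolynomial.eval (fun i => ρ * p.1 i + s * p.2 i) B)
      ((gaussn n).prod (gaussn n)) := by
  simp_rw [eval_mul_eval_mul_add_mul]
  exact integrable_finsetSum _ fun α _ => integrable_finsetSum _ fun β _ =>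
    (integrable_prod_pow_mul_mul_add_mul_pow α β ρ s).const_mul _

open Polynomial in
def corrPoly (A B : MvPolynomial (Fin n) ℝ) : ℝ[X] :=
  ∑ α ∈ A.support, ∑ β ∈ B.support, C (A.coeff α * B.coeff β) * ∏ i, pairCorrPoly (α i) (β i)

open Polynomial in
lemma natDegree_corrPoly_le (A B : MvPolynomial (Fin n) ℝ) :
    (corrPoly A B).natDegree ≤ B.totalDegree := by
  refine natDegree_sum_le_of_forall_le _ _ fun α _ => ?_
  refine natDegree_sum_le_of_forall_le _ _ fun β hβ => ?_
  refine (natDegree_C_mul_le _ _).trans <| (natDegree_prod_le _ _).trans ?_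
  calc ∑ i, (pairCorrPoly (α i) (β i)).natDegree ≤ ∑ i, β i :=
        Finset.sum_le_sum fun i _ => natDegree_pairCorrPoly_le _ _
    _ ≤ B.totalDegree := by
        simpa [Finsupp.sum_fintype] using MvPolynomial.le_totalDegree hβ

open Polynomial in
lemma integral_eval_mul_eval_mul_add_mul (A B : MvPolynomial (Fin n) ℝ) {ρ s : ℝ}
    (h : ρ ^ 2 + s ^ 2 = 1) :
    ∫ p : (Fin n → ℝ) × (Fin n → ℝ),
        MvPolynomial.eval p.1 A * MvPolynomial.eval (fun i => ρ * p.1 i + s * p.2 i) B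
        ∂(gaussn n).prod (gaussn n)
      = (corrPoly A B).eval ρ := by
  simp_rw [eval_mul_eval_mul_add_mul]
  rw [integral_finsetSum _ fun (α : Fin n →₀ ℕ) _ => integrable_finsetSum _
      fun (β : Fin n →₀ ℕ) _ => (integrable_prod_pow_mul_mul_add_mul_pow α β ρ s).const_mul _,
    corrPoly, eval_finsetSum]
  refine Finset.sum_congr rfl fun α _ => ?_
  rw [integral_finsetSum _ fun (β : Fin n →₀ ℕ) _ =>
      (integrable_prod_pow_mul_mul_add_mul_pow α β ρ s).const_mul _,
    eval_finsetSum]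
  refine Finset.sum_congr rfl fun β _ => ?_
  rw [integral_const_mul, eval_mul, eval_C, eval_prod, integral_prod_pow_mul_mul_add_mul_pow _ _ h]

instance : IsProbabilityMeasure (gaussn n) := by
  unfold gaussn
  infer_instance

variable (P : MvPolynomial (Fin n) ℝ)

lemma integral_eval_fst_sq :
    ∫ p : (Fin n → ℝ) × (Fin n → ℝ), (MvPolynomial.eval p.1 P) ^ 2 ∂(gaussn n).prod (gaussn n)
      = ∫ x, (MvPolynomial.eval x P) ^ 2 ∂gaussn n := by
  rw [integral_fun_fst (fun x => (MvPolynomial.eval x P) ^ 2)]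
  simp

lemma integral_eval_mul_add_mul_sq {ρ s : ℝ} (h : ρ ^ 2 + s ^ 2 = 1) :
    ∫ p : (Fin n → ℝ) × (Fin n → ℝ),
        (MvPolynomial.eval (fun i => ρ * p.1 i + s * p.2 i) P) ^ 2 ∂(gaussn n).prod (gaussn n)
      = ∫ x, (MvPolynomial.eval x P) ^ 2 ∂gaussn n := by
  have hP := measurePreserving_mul_add_mul_gaussn (n := n) h
  conv_rhs => rw [← hP.map_eq]
  rw [integral_map (f := fun x => (MvPolynomial.eval x P) ^ 2) hP.measurable.aemeasurable
    ((MvPolynomial.continuous_eval P).pow 2).aestronglyMeasurable]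

lemma integral_eval_mul_add_mul_sub_mul_sq (c : ℝ) {ρ s : ℝ} (h : ρ ^ 2 + s ^ 2 = 1) :
    ∫ p : (Fin n → ℝ) × (Fin n → ℝ),
        (MvPolynomial.eval (fun i => ρ * p.1 i + s * p.2 i) P - c * MvPolynomial.eval p.1 P) ^ 2
        ∂(gaussn n).prod (gaussn n)
      = (1 + c ^ 2) * ∫ x, (MvPolynomial.eval x P) ^ 2 ∂gaussn n
          - 2 * c * (corrPoly P P).eval ρ := by
  have hX := integrable_eval_mul_eval_mul_add_mul (P ^ 2) 1 ρ s
  have hZ := integrable_eval_mul_eval_mul_add_mul 1 (P ^ 2) ρ s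
  simp only [map_one, mul_one, one_mul, map_pow] at hX hZ
  rw [integral_sub_const_mul_sq hX hZ (integrable_eval_mul_eval_mul_add_mul P P ρ s),
    integral_eval_mul_add_mul_sq P h, integral_eval_fst_sq,
    integral_eval_mul_eval_mul_add_mul P P h]
  ring

lemma abs_eval_corrPoly_le {ρ : ℝ} (hρ : |ρ| ≤ 1) :
    |(corrPoly P P).eval ρ| ≤ ∫ x, (MvPolynomial.eval x P) ^ 2 ∂gaussn n := by
  have h : ρ ^ 2 + √(1 - ρ ^ 2) ^ 2 = 1 := by
    rw [Real.sq_sqrt (by nlinarith [abs_le.mp hρ])]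
    ring
  -- `E[(Z ∓ X)²] ≥ 0` bounds the correlation `E[X Z]` by `E[X²] = E[Z²]`
  have hle (c : ℝ) := integral_eval_mul_add_mul_sub_mul_sq P c h ▸
    integral_nonneg fun p => sq_nonneg _
  have h₁ := hle 1
  have h₂ := hle (-1)
  rw [abs_le]
  constructor <;> nlinarith

lemma eval_one_corrPoly :
    (corrPoly P P).eval 1 = ∫ x, (MvPolynomial.eval x P) ^ 2 ∂gaussn n := by
  rw [← integral_eval_mul_eval_mul_add_mul P P (s := 0) (by norm_num), ← integral_eval_fst_sq]
  simp [sq]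

theorem perturbation_norm_small_general (d : ℕ) :
    ∃ cd : ℝ, ∀ (n : ℕ) (P : MvPolynomial (Fin n) ℝ), P.totalDegree ≤ d →
      (∫ x, (MvPolynomial.eval x P) ^ 2 ∂(gaussn n)) = 1 →
        ∀ δ : ℝ, 0 < δ → δ < 1 →
          (∫ p : (Fin n → ℝ) × (Fin n → ℝ),
              (MvPolynomial.eval
                  (fun i => (1 - δ) * p.1 i + Real.sqrt (2 * δ - δ ^ 2) * p.2 i) P
                - MvPolynomial.eval p.1 P) ^ 2
            ∂((gaussn n).prod (gaussn n)))
            ≤ cd ^ 2 * δ := by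
  obtain ⟨C, hC0, hC⟩ := Polynomial.exists_eval_one_sub_eval_le d
  refine ⟨√(2 * C), fun n P hdeg hnorm δ hδ0 hδ1 => ?_⟩
  have hρs : (1 - δ) ^ 2 + √(2 * δ - δ ^ 2) ^ 2 = 1 := by
    rw [Real.sq_sqrt (by nlinarith)]
    ring
  have hbdd (t : ℝ) (ht : t ∈ Set.Icc (0 : ℝ) 1) : |(corrPoly P P).eval t| ≤ 1 :=
    hnorm ▸ abs_eval_corrPoly_le P (abs_le.mpr ⟨by linarith [ht.1], ht.2⟩)
  have hlip := hC _ ((natDegree_corrPoly_le P P).trans hdeg) hbdd (1 - δ) ⟨by linarith, by linarith⟩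
  rw [eval_one_corrPoly, hnorm] at hlip
  have hQ := integral_eval_mul_add_mul_sub_mul_sq P 1 hρs
  simp only [one_mul, hnorm] at hQ
  rw [hQ, Real.sq_sqrt (by positivity)]
  nlinarith

/-- Claim 4.1: for each `d ≥ 1` there is a constant `c_d` such that for
any polynomial `P` of total degree at most `d` with `E[P(X)²] = 1` under the standard
Gaussian, the perturbation polynomial `Q(X,Y) = P((1-δ)X + √(2δ-δ²)Y) - P(X)` satisfies
`E[Q²] ≤ c_d² δ`. -/
theorem perturbation_norm_small (d : ℕ) (hd : 1 ≤ d) :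
    ∃ cd : ℝ, ∀ (n : ℕ) (P : MvPolynomial (Fin n) ℝ), P.totalDegree ≤ d →
      (∫ x, (MvPolynomial.eval x P) ^ 2 ∂(gaussn n)) = 1 →
        ∀ δ : ℝ, 0 < δ → δ < 1 →
          (∫ p : (Fin n → ℝ) × (Fin n → ℝ),
              (MvPolynomial.eval
                  (fun i => (1 - δ) * p.1 i + Real.sqrt (2 * δ - δ ^ 2) * p.2 i) P
                - MvPolynomial.eval p.1 P) ^ 2
            ∂((gaussn n).prod (gaussn n)))
            ≤ cd ^ 2 * δ :=
  perturbation_norm_small_general d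
end
end

section
/- Let P be a real multivariate polynomial of total degree at most d on n variables and let f(x) = sign(P(x)) (with sign(0) = 1). For each i ∈ [n], write P(x) = x_i · P_i(x_{-i}) + Q_i(x_{-i}), where P_i and Q_i are polynomials not depending on x_i (this decomposition is for x ∈ {-1,1}^n, using x_i² = 1), and set f_i(x_{-i}) = sign(P_i(x_{-i})). Then AS(f) ≤ E_{X uniform on {-1,1}^n}[ | Σ_{i=1}^n X_i · f_i(X_{-i}) | ]. -/
open Finset MeasureTheory ProbabilityTheory
open scoped Classical

noncomputable section

/-! If `f = sign P` is sensitive to coordinate `i` at `x`, then `P(x) = x_i P_i + Q_i` and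
`P(x^{(i)}) = -x_i P_i + Q_i` have different signs, which forces `f(x) = x_i f_i(x)`. Since
`x ↦ x_i f_i(x)` is odd under flipping coordinate `i`, pairing `x` with `x^{(i)}` gives
`I_i(f) = E[f(X) X_i f_i(X)]`; summing over `i`, `AS(f) = E[f(X) Σ_i X_i f_i(X)]`, which is at
most `E|Σ_i X_i f_i(X)|`. -/

def sgn (t : ℝ) : ℝ := if 0 ≤ t then 1 else -1

def flipAt {n : ℕ} (i : Fin n) (x : Fin n → Bool) : Fin n → Bool :=
  Function.update x i (!x i)

theorem pmOne_not (b : Bool) : pmOne (!b) = -pmOne b := by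
  cases b <;> simp [pmOne]

theorem pmOne_mul_self (b : Bool) : pmOne b * pmOne b = 1 := by
  cases b <;> simp [pmOne]

theorem pmOne_injective : Function.Injective pmOne := by
  intro a b h
  cases a <;> cases b <;> first | rfl | norm_num [pmOne] at h

theorem pmOne_mul_le_abs (b : Bool) (t : ℝ) : pmOne b * t ≤ |t| := by
  cases b
  · simpa [pmOne] using neg_le_abs t
  · simpa [pmOne] using le_abs_self t

theorem pmOne_eq_sgn {b : Bool} {t : ℝ} (h : b = true ↔ 0 ≤ t) : pmOne b = sgn t := by
  cases b <;> simp_all [pmOne, sgn]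

theorem sgn_add_eq_sgn_of_ne {a q : ℝ} (h : sgn (a + q) ≠ sgn (-a + q)) :
    sgn (a + q) = sgn a := by
  unfold sgn at h ⊢
  split_ifs at h ⊢ <;> first | rfl | exact absurd rfl h | linarith

theorem sgn_pmOne_mul_add_of_ne (b : Bool) {p q : ℝ}
    (h : sgn (pmOne b * p + q) ≠ sgn (-(pmOne b * p) + q)) :
    sgn (pmOne b * p + q) = pmOne b * sgn p := by
  rw [sgn_add_eq_sgn_of_ne h]
  have hp : p ≠ 0 := by rintro rfl; simp at h
  rcases hp.lt_or_gt with hp | hp <;> cases b <;>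
    simp [pmOne, sgn, hp.le, not_le.mpr hp]

section Cube

variable {n : ℕ}

@[simp]
theorem flipAt_flipAt (i : Fin n) (x : Fin n → Bool) : flipAt i (flipAt i x) = x := by
  simp [flipAt]

@[simp]
theorem flipAt_apply_self (i : Fin n) (x : Fin n → Bool) : flipAt i x i = !x i := by
  simp [flipAt]

theorem sum_comp_flipAt (i : Fin n) (h : (Fin n → Bool) → ℝ) :
    ∑ x, h (flipAt i x) = ∑ x, h x :=
  Fintype.sum_bijective _ (Function.Involutive.bijective (flipAt_flipAt i)) _ _ fun _ => rfl

theorem sum_mul_eq_sum_half_sub_mul (i : Fin n) (F φ : (Fin n → Bool) → ℝ)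
    (hφ : ∀ x, φ (flipAt i x) = -φ x) :
    ∑ x, F x * φ x = ∑ x, (F x - F (flipAt i x)) / 2 * φ x := by
  have hflip : ∑ x, F (flipAt i x) * φ x = -∑ x, F x * φ x := by
    rw [← sum_comp_flipAt i, ← sum_neg_distrib]
    simp [hφ]
  simp only [sub_div, sub_mul, sum_sub_distrib, div_mul_eq_mul_div, ← sum_div, hflip]
  ring

theorem influence_eq_sum_pmOne_mul (f : (Fin n → Bool) → Bool) (i : Fin n)
    (g : (Fin n → Bool) → ℝ) (hg : ∀ x, g (flipAt i x) = g x)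
    (hsens : ∀ x, f x ≠ f (flipAt i x) → pmOne (f x) = pmOne (x i) * g x) :
    influence f i = 1 / 2 ^ n * ∑ x, pmOne (f x) * (pmOne (x i) * g x) := by
  change 1 / 2 ^ n * ∑ x, (if f x ≠ f (flipAt i x) then (1 : ℝ) else 0) = _
  rw [sum_mul_eq_sum_half_sub_mul i _ _ fun x => by simp [hg, pmOne_not]]
  congr 1
  refine sum_congr rfl fun x _ => ?_
  by_cases hx : f x = f (flipAt i x)
  · simp [hx]
  · have hflip : f (flipAt i x) = !f x := Bool.eq_not.mpr (Ne.symm hx)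
    rw [if_pos hx, ← hsens x hx, hflip, pmOne_not]
    linear_combination -pmOne_mul_self (f x)

theorem avgSens_le_of_sensitive (f : (Fin n → Bool) → Bool) (g : Fin n → (Fin n → Bool) → ℝ)
    (hg : ∀ i x, g i (flipAt i x) = g i x)
    (hsens : ∀ i x, f x ≠ f (flipAt i x) → pmOne (f x) = pmOne (x i) * g i x) :
    avgSens f ≤ 1 / 2 ^ n * ∑ x, |∑ i, pmOne (x i) * g i x| :=
  calc avgSens f = 1 / 2 ^ n * ∑ x, pmOne (f x) * ∑ i, pmOne (x i) * g i x := by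
        simp only [avgSens, influence_eq_sum_pmOne_mul f _ _ (hg _) (hsens _), ← mul_sum]
        rw [sum_comm]
        simp only [mul_sum]
    _ ≤ 1 / 2 ^ n * ∑ x, |∑ i, pmOne (x i) * g i x| := by
        gcongr with x
        exact pmOne_mul_le_abs _ _

end Cube

theorem avgSens_le_expectation_abs_sum_general (n : ℕ) (P : MvPolynomial (Fin n) ℝ)
    (f : (Fin n → Bool) → Bool)
    (hf : ∀ x, (f x = true ↔ 0 ≤ MvPolynomial.eval (fun i => pmOne (x i)) P))
    (Pi Qi : Fin n → ((Fin n → Bool) → ℝ))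
    (hPi : ∀ (i : Fin n) (x : Fin n → Bool) (b : Bool),
      Pi i (Function.update x i b) = Pi i x)
    (hQi : ∀ (i : Fin n) (x : Fin n → Bool) (b : Bool),
      Qi i (Function.update x i b) = Qi i x)
    (hdec : ∀ (i : Fin n) (x : Fin n → Bool),
      MvPolynomial.eval (fun j => pmOne (x j)) P = pmOne (x i) * Pi i x + Qi i x) :
    avgSens f ≤ (1 / 2 ^ n : ℝ) * ∑ x : Fin n → Bool,
      |∑ i, pmOne (x i) * (if 0 ≤ Pi i x then 1 else -1)| := by
  refine avgSens_le_of_sensitive f (fun i x => sgn (Pi i x)) (fun i x => by simp only [flipAt, hPi])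
    fun i x hx => ?_
  have hval : ∀ y, pmOne (f y) = sgn (MvPolynomial.eval (fun j => pmOne (y j)) P) :=
    fun y => pmOne_eq_sgn (hf y)
  have hval_flip : pmOne (f (flipAt i x)) = sgn (-(pmOne (x i) * Pi i x) + Qi i x) := by
    rw [hval, hdec i, flipAt_apply_self, pmOne_not, flipAt, hPi, hQi, neg_mul]
  rw [hval, hdec i]
  exact sgn_pmOne_mul_add_of_ne (x i) fun h =>
    hx (pmOne_injective (by rw [hval_flip, ← h, hval, hdec i]))

/-- for a degree-`d` PTF `f = sign(P)`, writing
`P(x) = x_i P_i(x_{-i}) + Q_i(x_{-i})` on the hypercube (with `P_i, Q_i` not depending on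
coordinate `i`) and `f_i = sign(P_i)`, we have `AS(f) ≤ E|Σ_i X_i f_i(X_{-i})|`. -/
theorem avgSens_le_expectation_abs_sum (n d : ℕ) (P : MvPolynomial (Fin n) ℝ)
    (hdeg : P.totalDegree ≤ d) (f : (Fin n → Bool) → Bool)
    (hf : ∀ x, (f x = true ↔ 0 ≤ MvPolynomial.eval (fun i => pmOne (x i)) P))
    (Pi Qi : Fin n → ((Fin n → Bool) → ℝ))
    (hPi : ∀ (i : Fin n) (x : Fin n → Bool) (b : Bool),
      Pi i (Function.update x i b) = Pi i x)
    (hQi : ∀ (i : Fin n) (x : Fin n → Bool) (b : Bool),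
      Qi i (Function.update x i b) = Qi i x)
    (hdec : ∀ (i : Fin n) (x : Fin n → Bool),
      MvPolynomial.eval (fun j => pmOne (x j)) P = pmOne (x i) * Pi i x + Qi i x) :
    avgSens f ≤ (1 / 2 ^ n : ℝ) * ∑ x : Fin n → Bool,
      |∑ i, pmOne (x i) * (if 0 ≤ Pi i x then 1 else -1)| :=
  avgSens_le_expectation_abs_sum_general n P f hf Pi Qi hPi hQi hdec
end
end
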